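/- For all natural numbers k ≥ 2, r ≥ 2, s ≥ 2 and L, setting n = s·k, if max(k, 2r − 1) ≤ L ≤ (s − 1)·k, then there exists a multigraph E : Fin (r·n) → Sym2 (Fin n) that is decodable, has exactly L loop indices, and satisfies m(G) = 2r − 1 and δ_I(G) = 2r − 1. -/

import Mathlib

/-- `e` is a loop index at vertex `v`. -/
def IsLoopIdx {V : Type*} {m : ℕ} (E : Fin m → Sym2 V) (v : V) (e : Fin m) : Prop :=
  E e = Sym2.diag v

/-- `u` and `v` are connected in the multigraph `E` with the edge indices in `S` deleted. -/
def ConnectedMod {V : Type*} {m : ℕ} (E : Fin m → Sym2 V) (S : Finset (Fin m))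
    (u v : V) : Prop :=
  Relation.EqvGen (fun a b => ∃ e : Fin m, e ∉ S ∧ E e = s(a, b)) u v

/-- `G − S` is decodable: every vertex is connected in `G − S` to a vertex with a loop
outside `S`. -/
def DecodableMod {V : Type*} {m : ℕ} (E : Fin m → Sym2 V) (S : Finset (Fin m)) : Prop :=
  ∀ u : V, ∃ v : V, (∃ e : Fin m, e ∉ S ∧ IsLoopIdx E v e) ∧ ConnectedMod E S u v

def IsDecodable {V : Type*} {m : ℕ} (E : Fin m → Sym2 V) : Prop :=
  DecodableMod E ∅

/-- `c_x^G`: the number of `x`-element sets of edge indices whose deletion leaves a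
decodable graph. -/
noncomputable def cG {V : Type*} {m : ℕ} (E : Fin m → Sym2 V) (x : ℕ) : ℕ :=
  Set.ncard {S : Finset (Fin m) | S.card = x ∧ DecodableMod E S}

/-- `k_x^G = C(m,x) − c_x^G`. -/
noncomputable def kG {V : Type*} {m : ℕ} (E : Fin m → Sym2 V) (x : ℕ) : ℕ :=
  Nat.choose m x - cG E x

/-- `m(G)`: the minimum cardinality of a loop cut. -/
noncomputable def mCut {V : Type*} {m : ℕ} (E : Fin m → Sym2 V) : ℕ :=
  sInf {k : ℕ | ∃ S : Finset (Fin m), S.card = k ∧ ¬ DecodableMod E S}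

/-- incidence degree of `v` (a loop at `v` counts once). -/
noncomputable def dI {V : Type*} {m : ℕ} (E : Fin m → Sym2 V) (v : V) : ℕ :=
  Set.ncard {e : Fin m | v ∈ E e}

/-- `δ_I(G)`: the minimum incidence degree. -/
noncomputable def deltaI {V : Type*} {m : ℕ} (E : Fin m → Sym2 V) : ℕ :=
  sInf (Set.range (dI E))

/-- `L_G`: the number of loop indices. -/
noncomputable def LG {V : Type*} {m : ℕ} (E : Fin m → Sym2 V) : ℕ :=
  Set.ncard {e : Fin m | ∃ v : V, E e = Sym2.diag v}

/-- `δ_ℓ(v)`: the number of loop indices at `v`. -/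
noncomputable def loopsAt {V : Type*} {m : ℕ} (E : Fin m → Sym2 V) (v : V) : ℕ :=
  Set.ncard {e : Fin m | E e = Sym2.diag v}

/-- `Δ_ℓ(G)`: the maximum number of loops at a single vertex. -/
noncomputable def DeltaLoops {V : Type*} {m : ℕ} (E : Fin m → Sym2 V) : ℕ :=
  sSup (Set.range (loopsAt E))

/-- `κ_G`: the edge connectivity. -/
noncomputable def kappaG {V : Type*} {m : ℕ} (E : Fin m → Sym2 V) : ℕ :=
  sInf {k : ℕ | ∃ S : Finset (Fin m), S.card = k ∧ ∃ u v : V, ¬ ConnectedMod E S u v}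


/-!
Take `r` parallel copies of the cycle on `Fin n` and turn copy `0` of the first `L` cycle
edges `w — w + 1` into loops at `w`. A vertex `v` then lies on the `r` slots at position `v` and
on the non-loop slots at position `v - 1`, so its incidence degree is `2r` or `2r - 1`, with
`2r - 1` attained at `v = 1`; deleting the edges at such a vertex isolates it without a loop.
Conversely, deleting at most `2r - 2` edges cuts (empties) at most two bundles of parallel cycle
edges. If two are cut, counting shows that both sit at loop positions and nothing else was
deleted, so walking forward along the cycle every vertex reaches one of these two loops. If at
most one bundle is cut the cycle stays connected, and one of the `L > 2r - 2` loops survives.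
-/

open Finset

section General

variable {V : Type*} {m : ℕ} (E : Fin m → Sym2 V)

theorem dI_eq_card [DecidableEq V] (v : V) : dI E v = #{e | v ∈ E e} := by
  rw [dI, Set.ncard_eq_toFinset_card', Set.toFinset_ofPred]

theorem eq_of_connectedMod_of_incident_subset {S : Finset (Fin m)} {x v : V}
    (hx : ∀ e, x ∈ E e → e ∈ S) (h : ConnectedMod E S x v) : v = x := by
  have hequiv : Equivalence fun a b : V => (a = x ↔ b = x) :=
    ⟨fun _ => Iff.rfl, Iff.symm, Iff.trans⟩
  refine (hequiv.eqvGen_iff.mp (h.mono fun a b ⟨e, he, hE⟩ => ?_)).mp rfl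
  constructor <;> rintro rfl <;> exact absurd (hx e (by simp [hE])) he

theorem not_decodableMod_of_incident_subset {S : Finset (Fin m)} {x : V}
    (hx : ∀ e, x ∈ E e → e ∈ S) : ¬ DecodableMod E S := fun hdec => by
  obtain ⟨v, ⟨e, he, hloop⟩, hconn⟩ := hdec x
  obtain rfl := eq_of_connectedMod_of_incident_subset E hx hconn
  exact he (hx e (by rw [show E e = _ from hloop]; exact Sym2.mem_mk_left _ _))

theorem mCut_le_dI (v : V) : mCut E ≤ dI E v := by
  classical
  rw [dI_eq_card]
  exact Nat.sInf_le
    ⟨_, rfl, not_decodableMod_of_incident_subset E fun e he => by simpa using he⟩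

theorem le_mCut [Nonempty V] {c : ℕ} (h : ∀ S : Finset (Fin m), #S < c → DecodableMod E S) :
    c ≤ mCut E := by
  have huniv : ¬ DecodableMod E univ := fun hdec => by
    obtain ⟨_, ⟨e, he, _⟩, _⟩ := hdec (Classical.arbitrary V)
    exact he (mem_univ e)
  refine le_csInf ⟨_, univ, rfl, huniv⟩ ?_
  rintro _ ⟨S, rfl, hS⟩
  by_contra! hlt
  exact hS (h S hlt)

theorem deltaI_le_dI (v : V) : deltaI E ≤ dI E v := Nat.sInf_le ⟨v, rfl⟩

theorem le_deltaI [Nonempty V] {c : ℕ} (h : ∀ v, c ≤ dI E v) : c ≤ deltaI E :=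
  le_csInf (Set.range_nonempty _) (by rintro _ ⟨v, rfl⟩; exact h v)

end General

section Cycle

open Fin.NatCast

variable {m n : ℕ} [NeZero n] (E : Fin m → Sym2 (Fin n)) (S : Finset (Fin m))

theorem connectedMod_of_forward {u w : Fin n}
    (h : ∀ x, (x - u).val < (w - u).val → ∃ e, e ∉ S ∧ E e = s(x, x + 1)) :
    ConnectedMod E S u w := by
  suffices ∀ t ≤ (w - u).val, ConnectedMod E S u (u + (t : Fin n)) by
    simpa using this _ le_rfl
  intro t ht
  have := (w - u).isLt
  induction t with
  | zero =>
    rw [Nat.cast_zero, add_zero]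
    exact .refl u
  | succ t ih =>
    have hstep : ∃ e, e ∉ S ∧ E e = s(u + (t : Fin n), u + (t : Fin n) + 1) :=
      h _ (by simpa [Fin.val_natCast, Nat.mod_eq_of_lt (show t < n by omega)] using ht)
    rw [Nat.cast_succ, ← add_assoc]
    exact (ih (by omega)).trans _ _ _ (.rel _ _ hstep)

theorem connectedMod_or_of_forall_ne (w₀ w₁ : Fin n)
    (h : ∀ x, x ≠ w₀ → x ≠ w₁ → ∃ e, e ∉ S ∧ E e = s(x, x + 1)) (u : Fin n) :
    ConnectedMod E S u w₀ ∨ ConnectedMod E S u w₁ := by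
  rcases le_total (w₀ - u).val (w₁ - u).val with hle | hle
  · refine .inl (connectedMod_of_forward E S fun x hx => h x ?_ ?_) <;> rintro rfl <;> omega
  · refine .inr (connectedMod_of_forward E S fun x hx => h x ?_ ?_) <;> rintro rfl <;> omega

theorem decodableMod_of_forall_ne (w₀ : Fin n)
    (h : ∀ x, x ≠ w₀ → ∃ e, e ∉ S ∧ E e = s(x, x + 1))
    {v : Fin n} (hv : ∃ e, e ∉ S ∧ IsLoopIdx E v e) : DecodableMod E S := by
  have hconn u : ConnectedMod E S u w₀ :=
    (connectedMod_or_of_forall_ne E S w₀ w₀ (fun x hx _ => h x hx) u).elim id id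
  exact fun u => ⟨v, hv, (hconn u).trans _ _ _ (hconn v).symm⟩

theorem decodableMod_of_forall_ne_ne (w₀ w₁ : Fin n)
    (h : ∀ x, x ≠ w₀ → x ≠ w₁ → ∃ e, e ∉ S ∧ E e = s(x, x + 1))
    (h₀ : ∃ e, e ∉ S ∧ IsLoopIdx E w₀ e) (h₁ : ∃ e, e ∉ S ∧ IsLoopIdx E w₁ e) :
    DecodableMod E S := fun u =>
  (connectedMod_or_of_forall_ne E S w₀ w₁ h u).elim (⟨w₀, h₀, ·⟩)
    (⟨w₁, h₁, ·⟩)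

end Cycle

section Slots

variable {r n : ℕ} (L : ℕ)

def cycleLoops : Finset (Fin r × Fin n) := {p | p.1.val = 0 ∧ p.2.val < L}

def cycleBundle (w : Fin n) : Finset (Fin r × Fin n) := {p | p.2 = w ∧ p ∉ cycleLoops L}

theorem card_filter_fin_val_eq_zero (hr : 0 < r) : #{a : Fin r | a.val = 0} = 1 := by
  have := Fin.card_filter_val_lt (n := r) (m := 1)
  simp only [Nat.lt_one_iff] at this
  omega

theorem card_filter_snd_eq (v : Fin n) : #{p : Fin r × Fin n | p.2 = v} = r := by
  have : ({p : Fin r × Fin n | p.2 = v} : Finset _) = univ ×ˢ {v} := by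
    ext ⟨a, x⟩
    simp [eq_comm]
  simp [this]

theorem card_cycleLoops (hr : 0 < r) (hLn : L ≤ n) :
    #(cycleLoops L : Finset (Fin r × Fin n)) = L := by
  have : cycleLoops L =
      ({a : Fin r | a.val = 0} : Finset _) ×ˢ ({w : Fin n | w.val < L} : Finset _) := by
    ext
    simp [cycleLoops]
  rw [this, card_product, card_filter_fin_val_eq_zero hr, Fin.card_filter_val_lt,
    min_eq_right hLn, one_mul]

theorem card_cycleBundle (hr : 0 < r) (w : Fin n) :
    #(cycleBundle L w : Finset (Fin r × Fin n)) = if w.val < L then r - 1 else r := by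
  have : cycleBundle L w = ({a : Fin r | ¬ (a.val = 0 ∧ w.val < L)} : Finset _) ×ˢ {w} := by
    ext ⟨a, x⟩
    simp only [cycleBundle, cycleLoops, mem_filter, mem_univ, true_and, mem_product,
      mem_singleton]
    constructor
    · rintro ⟨rfl, h⟩
      exact ⟨h, rfl⟩
    · rintro ⟨h, rfl⟩
      exact ⟨rfl, h⟩
  rw [this, card_product, card_singleton, mul_one]
  split_ifs with hw
  · have := card_filter_add_card_filter_not (s := (univ : Finset (Fin r))) (fun a => a.val = 0)
    simp only [hw, and_true, card_univ, Fintype.card_fin, card_filter_fin_val_eq_zero hr]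
      at this ⊢
    omega
  · simp [hw]

theorem disjoint_cycleBundle {w₀ w₁ : Fin n} (h : w₀ ≠ w₁) :
    Disjoint (cycleBundle L w₀ : Finset (Fin r × Fin n)) (cycleBundle L w₁) := by
  simp only [disjoint_left, cycleBundle, mem_filter, mem_univ, true_and]
  rintro p ⟨rfl, -⟩ ⟨h', -⟩
  exact h h'

variable (r n) in
def loopedCycleBundle (w : Fin n) : Finset (Fin (r * n)) :=
  (cycleBundle L w).map finProdFinEquiv.toEmbedding

end Slots

section LoopedCycle

open Fin.NatCast

variable {r n L : ℕ} [NeZero n]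

variable (L) in
/-- Slot `(a, w)` is the `a`-th copy of the cycle edge `w — w + 1`. -/
def loopedCycleEdge (p : Fin r × Fin n) : Sym2 (Fin n) :=
  if p ∈ cycleLoops L then Sym2.diag p.2 else s(p.2, p.2 + 1)

variable (r n L) in
def loopedCycle (e : Fin (r * n)) : Sym2 (Fin n) :=
  loopedCycleEdge L (finProdFinEquiv.symm e)

theorem loopedCycleEdge_of_mem_cycleBundle {w : Fin n} {p : Fin r × Fin n}
    (hp : p ∈ cycleBundle L w) : loopedCycleEdge L p = s(w, w + 1) := by
  simp only [cycleBundle, mem_filter, mem_univ, true_and] at hp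
  rw [loopedCycleEdge, if_neg hp.2, hp.1]

theorem mem_loopedCycleEdge_iff {v : Fin n} {p : Fin r × Fin n} :
    v ∈ loopedCycleEdge L p ↔ p.2 = v ∨ p ∈ cycleBundle L (v - 1) := by
  by_cases hp : p ∈ cycleLoops L
  · simp [loopedCycleEdge, cycleBundle, hp, eq_comm, Sym2.diag]
  · simp [loopedCycleEdge, cycleBundle, hp, eq_comm, eq_sub_iff_add_eq]

theorem exists_loopedCycleEdge_eq_diag_iff (hn : 1 < n) {p : Fin r × Fin n} :
    (∃ v, loopedCycleEdge L p = Sym2.diag v) ↔ p ∈ cycleLoops L := by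
  have h10 : (1 : Fin n) ≠ 0 := by simp [Fin.ext_iff, Nat.mod_eq_of_lt hn]
  by_cases hp : p ∈ cycleLoops L
  · simp [loopedCycleEdge, hp]
  · simp [loopedCycleEdge, hp, Sym2.diag, h10]

theorem LG_loopedCycle (hn : 1 < n) (hr : 0 < r) (hLn : L ≤ n) :
    LG (loopedCycle r n L) = L := by
  have : {e | ∃ v, loopedCycle r n L e = Sym2.diag v} =
      ((cycleLoops L).map finProdFinEquiv.toEmbedding : Finset (Fin (r * n))) := by
    ext e
    simp [loopedCycle, exists_loopedCycleEdge_eq_diag_iff hn]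
  rw [LG, this, Set.ncard_coe_finset, card_map, card_cycleLoops L hr hLn]

theorem dI_loopedCycle (hn : 1 < n) (v : Fin n) :
    dI (loopedCycle r n L) v = r + #(cycleBundle L (v - 1) : Finset (Fin r × Fin n)) := by
  have h10 : (1 : Fin n) ≠ 0 := by simp [Fin.ext_iff, Nat.mod_eq_of_lt hn]
  have hdisj : Disjoint ({p : Fin r × Fin n | p.2 = v} : Finset _) (cycleBundle L (v - 1)) := by
    simp only [disjoint_left, cycleBundle, mem_filter, mem_univ, true_and]
    rintro p rfl ⟨h, -⟩
    exact h10 (sub_eq_self.mp h.symm)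
  calc dI (loopedCycle r n L) v
      = #(({p : Fin r × Fin n | p.2 = v} : Finset _) ∪ cycleBundle L (v - 1)) := by
        rw [dI_eq_card]
        refine card_equiv finProdFinEquiv.symm fun e => ?_
        simp [loopedCycle, mem_loopedCycleEdge_iff]
    _ = r + #(cycleBundle L (v - 1)) := by rw [card_union_of_disjoint hdisj, card_filter_snd_eq]

theorem le_dI_loopedCycle (hn : 1 < n) (hr : 0 < r) (v : Fin n) :
    2 * r - 1 ≤ dI (loopedCycle r n L) v := by
  rw [dI_loopedCycle hn, card_cycleBundle L hr]
  split_ifs <;> omega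

theorem dI_loopedCycle_one (hn : 1 < n) (hr : 0 < r) (hL : 0 < L) :
    dI (loopedCycle r n L) 1 = 2 * r - 1 := by
  rw [dI_loopedCycle hn, sub_self, card_cycleBundle L hr, if_pos (by simpa using hL)]
  omega

theorem deltaI_loopedCycle (hn : 1 < n) (hr : 0 < r) (hL : 0 < L) :
    deltaI (loopedCycle r n L) = 2 * r - 1 :=
  le_antisymm (dI_loopedCycle_one hn hr hL ▸ deltaI_le_dI _ 1)
    (le_deltaI _ (le_dI_loopedCycle hn hr))

theorem exists_notMem_loopedCycle_eq {S : Finset (Fin (r * n))} {w : Fin n}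
    (h : ¬ loopedCycleBundle r n L w ⊆ S) :
    ∃ e, e ∉ S ∧ loopedCycle r n L e = s(w, w + 1) := by
  obtain ⟨e, he, heS⟩ := not_subset.mp h
  rw [loopedCycleBundle, mem_map_equiv] at he
  exact ⟨e, heS, loopedCycleEdge_of_mem_cycleBundle he⟩

theorem exists_notMem_isLoopIdx_loopedCycle {S : Finset (Fin (r * n))} {p : Fin r × Fin n}
    (hp : p ∈ cycleLoops L) (hpS : finProdFinEquiv p ∉ S) :
    ∃ e, e ∉ S ∧ IsLoopIdx (loopedCycle r n L) p.2 e :=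
  ⟨_, hpS, by simp [IsLoopIdx, loopedCycle, loopedCycleEdge, hp]⟩

theorem decodableMod_loopedCycle_of_two_cut (hr : 2 ≤ r) {S : Finset (Fin (r * n))}
    (hS : #S ≤ 2 * r - 2) {w₀ w₁ : Fin n} (hne : w₀ ≠ w₁)
    (h₀ : loopedCycleBundle r n L w₀ ⊆ S) (h₁ : loopedCycleBundle r n L w₁ ⊆ S) :
    DecodableMod (loopedCycle r n L) S := by
  have hU : #(loopedCycleBundle r n L w₀ ∪ loopedCycleBundle r n L w₁) =
      #(cycleBundle (r := r) L w₀) + #(cycleBundle (r := r) L w₁) := by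
    rw [loopedCycleBundle, loopedCycleBundle, ← map_union, card_map,
      card_union_of_disjoint (disjoint_cycleBundle L hne)]
  have hUS := card_le_card (union_subset h₀ h₁)
  have hc₀ := card_cycleBundle (r := r) L (by omega) w₀
  have hc₁ := card_cycleBundle (r := r) L (by omega) w₁
  have hw₀ : w₀.val < L := by
    by_contra h
    rw [if_neg h] at hc₀
    split_ifs at hc₁ <;> omega
  rw [if_pos hw₀] at hc₀
  have hw₁ : w₁.val < L := by
    by_contra h
    rw [if_neg h] at hc₁
    omega
  rw [if_pos hw₁] at hc₁
  -- counting forces `S` to consist of exactly the two cut bundles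
  have hmemS (p : Fin r × Fin n) :
      finProdFinEquiv p ∈ S ↔ p ∈ cycleBundle L w₀ ∪ cycleBundle L w₁ := by
    rw [← eq_of_subset_of_card_le (union_subset h₀ h₁) (by omega), loopedCycleBundle,
      loopedCycleBundle, ← map_union, mem_map_equiv, Equiv.symm_apply_apply]
  have hloop (w : Fin n) (hw : w.val < L) : ∃ e, e ∉ S ∧ IsLoopIdx (loopedCycle r n L) w e :=
    exists_notMem_isLoopIdx_loopedCycle (p := (⟨0, by omega⟩, w)) (by simp [cycleLoops, hw])
      (by simp [hmemS, cycleBundle, cycleLoops, hw])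
  refine decodableMod_of_forall_ne_ne _ S w₀ w₁
    (fun x hx₀ hx₁ => exists_notMem_loopedCycle_eq fun hx => ?_)
    (hloop w₀ hw₀) (hloop w₁ hw₁)
  have hp : (⟨1, by omega⟩, x) ∈ cycleBundle (r := r) L x := by simp [cycleBundle, cycleLoops]
  simpa [cycleBundle, hx₀, hx₁] using (hmemS _).mp (hx (mem_map_of_mem _ hp))

theorem decodableMod_loopedCycle_of_card_le (hr : 2 ≤ r) (hL : 2 * r - 1 ≤ L) (hLn : L ≤ n)
    (S : Finset (Fin (r * n))) (hS : #S ≤ 2 * r - 2) : DecodableMod (loopedCycle r n L) S := by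
  by_cases htwo : ∃ w₀ w₁, w₀ ≠ w₁ ∧
      loopedCycleBundle r n L w₀ ⊆ S ∧ loopedCycleBundle r n L w₁ ⊆ S
  · obtain ⟨w₀, w₁, hne, h₀, h₁⟩ := htwo
    exact decodableMod_loopedCycle_of_two_cut hr hS hne h₀ h₁
  push Not at htwo
  obtain ⟨w₀, hw₀⟩ : ∃ w₀,
      ∀ x, x ≠ w₀ → ¬ loopedCycleBundle r n L x ⊆ S := by
    by_cases hcut : ∃ w₀, loopedCycleBundle r n L w₀ ⊆ S
    · obtain ⟨w₀, h₀⟩ := hcut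
      exact ⟨w₀, fun x hx => htwo w₀ x (Ne.symm hx) h₀⟩
    · push Not at hcut
      exact ⟨0, fun x _ => hcut x⟩
  have hloops : #S < #((cycleLoops L).map (finProdFinEquiv (m := r) (n := n)).toEmbedding) := by
    rw [card_map, card_cycleLoops L (by omega) hLn]
    omega
  obtain ⟨e, he, heS⟩ := exists_mem_notMem_of_card_lt_card hloops
  rw [mem_map_equiv] at he
  exact decodableMod_of_forall_ne _ S w₀ (fun x hx => exists_notMem_loopedCycle_eq (hw₀ x hx))
    (exists_notMem_isLoopIdx_loopedCycle he (by rwa [Equiv.apply_symm_apply]))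

theorem mCut_loopedCycle (hr : 2 ≤ r) (hL : 2 * r - 1 ≤ L) (hLn : L ≤ n) :
    mCut (loopedCycle r n L) = 2 * r - 1 := by
  refine le_antisymm ?_
    (le_mCut _ fun S hS => decodableMod_loopedCycle_of_card_le hr hL hLn S (by omega))
  rw [← dI_loopedCycle_one (n := n) (L := L) (by omega) (by omega) (by omega)]
  exact mCut_le_dI _ 1

end LoopedCycle

theorem stmt16_general (k r s L : ℕ) (hr : 2 ≤ r)
    (hL1 : max k (2 * r - 1) ≤ L) (hL2 : L ≤ (s - 1) * k) :
    ∃ E : Fin (r * (s * k)) → Sym2 (Fin (s * k)),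
      IsDecodable E ∧ LG E = L ∧ mCut E = 2 * r - 1 ∧ deltaI E = 2 * r - 1 := by
  have hL : 2 * r - 1 ≤ L := le_of_max_le_right hL1
  have hLn : L ≤ s * k := hL2.trans (Nat.mul_le_mul_right k (Nat.sub_le s 1))
  have : NeZero (s * k) := ⟨by omega⟩
  exact ⟨loopedCycle r (s * k) L,
    decodableMod_loopedCycle_of_card_le hr hL hLn ∅ (by simp),
    LG_loopedCycle (by omega) (by omega) hLn,
    mCut_loopedCycle hr hL hLn,
    deltaI_loopedCycle (by omega) (by omega) (by omega)⟩

theorem stmt16 (k r s L : ℕ) (hk : 2 ≤ k) (hr : 2 ≤ r) (hs : 2 ≤ s)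
    (hL1 : max k (2 * r - 1) ≤ L) (hL2 : L ≤ (s - 1) * k) :
    ∃ E : Fin (r * (s * k)) → Sym2 (Fin (s * k)),
      IsDecodable E ∧ LG E = L ∧ mCut E = 2 * r - 1 ∧ deltaI E = 2 * r - 1 :=
  stmt16_general k r s L hr hL1 hL2
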